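/- Let C be a comb domain as described. For every n ≥ 1 and every real r with x_{n−1} < r ≤ x_n, the hyperbolic distance in C between x_{n−1} and r satisfies d_C(x_{n−1}, r) ≤ 4 arcsinh(r). -/

import Mathlib

open Filter

noncomputable section

/-- `f` is a Riemann mapping from the unit disk onto `D`: a conformal
(holomorphic and injective) map of the unit disk onto `D`. -/
def IsRiemannMap (f : ℂ → ℂ) (D : Set ℂ) : Prop :=
  DifferentiableOn ℂ f (Metric.ball 0 1) ∧
    Set.InjOn f (Metric.ball 0 1) ∧ f '' Metric.ball 0 1 = D

/-- `f` belongs to the Hardy space `H^p` of the unit disk: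
`sup_{0<r<1} ∫_0^{2π} |f(r e^{iθ})|^p dθ < +∞`. -/
def MemHardy (f : ℂ → ℂ) (p : ℝ) : Prop :=
  ∃ M : ℝ, ∀ r : ℝ, 0 < r → r < 1 →
    (∫ θ in (0:ℝ)..(2 * Real.pi),
      ‖f (↑r * Complex.exp (↑θ * Complex.I))‖ ^ p) ≤ M

/-- The Hardy number of a domain `D`:
`h(D) = sup {p > 0 : f ∈ H^p(𝔻)}` where `f` is a Riemann mapping of `𝔻` onto `D`. -/
def hardyNumber (D : Set ℂ) : EReal :=
  sSup {q : EReal | ∃ p : ℝ, 0 < p ∧ q = (p : EReal) ∧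
    ∃ f : ℂ → ℂ, IsRiemannMap f D ∧ MemHardy f p}

/-- The comb domain `C = {z : Re z > -x₁} \ ⋃_{n ≥ 0} {xₙ + iy : |y| ≥ 1}`. -/
def comb (x : ℕ → ℝ) : Set ℂ :=
  {z : ℂ | -(x 1) < z.re} \ ⋃ n : ℕ, {z : ℂ | z.re = x n ∧ 1 ≤ |z.im|}

/-- The hyperbolic distance between two points of the unit disk. -/
def hypDistDisk (z w : ℂ) : ℝ :=
  Real.log ((1 + ‖(z - w) / (1 - z * (starRingEnd ℂ) w)‖) /
    (1 - ‖(z - w) / (1 - z * (starRingEnd ℂ) w)‖))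

/-!
Let `g` be the inverse of the Riemann map `f`; it is holomorphic on `C`. By Schwarz–Pick, a disk
`B(t, ρ) ⊆ C` gives `d_C(t, w) ≤ d_𝔻(0, (w - t) / ρ)`. A real point of `[xₙ, xₙ₊₁]` at distance
`δ` from the nearer slit base is the centre of a disk of radius `√(1 + δ²)` inside `C`, so along
`t = xₙ + sinh s` (or `t = xₙ₊₁ - sinh s`) the hyperbolic density of `C` is at most `2 / cosh s`
while `|dt/ds| = cosh s`. Chaining the Schwarz–Pick bound along finer and finer subdivisions gives
`d_C(xₙ + sinh s₁, xₙ + sinh s₂) ≤ 2 |s₂ - s₁|`. Up to the midpoint `m` of `[xₙ, xₙ₊₁]` this bounds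
`d_C(xₙ, r)` by `2 arsinh (r - xₙ)`; beyond it, the detour through `m` costs at most
`4 arsinh ((xₙ₊₁ - xₙ) / 2) ≤ 4 arsinh r`.
-/

open Complex ComplexConjugate Function Metric Set Topology

namespace Real

lemma tanh_add (a b : ℝ) : tanh (a + b) = (tanh a + tanh b) / (1 + tanh a * tanh b) := by
  have ha := (cosh_pos a).ne'
  have hb := (cosh_pos b).ne'
  have hab : cosh a * cosh b + sinh a * sinh b ≠ 0 := by rw [← cosh_add]; positivity
  simp only [tanh_eq_sinh_div_cosh, sinh_add, cosh_add]
  field_simp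

lemma artanh_add_artanh {p q : ℝ} (hp : p ∈ Ioo (-1) 1) (hq : q ∈ Ioo (-1) 1) :
    artanh p + artanh q = artanh ((p + q) / (1 + p * q)) := by
  rw [← artanh_tanh (artanh p + artanh q), tanh_add, tanh_artanh hp, tanh_artanh hq]

lemma artanh_le_div_one_sub {u : ℝ} (hu0 : 0 ≤ u) (hu1 : u < 1) : artanh u ≤ u / (1 - u) := by
  rw [artanh_eq_half_log ⟨by linarith, hu1.le⟩]
  have hlog := log_le_sub_one_of_pos (x := (1 + u) / (1 - u)) (by apply div_pos <;> linarith)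
  have : (1 + u) / (1 - u) - 1 = 2 * (u / (1 - u)) := by
    field_simp [(by linarith : 0 < 1 - u).ne']
    ring
  linarith

lemma sinh_add_sub_sinh_le (s h : ℝ) : sinh (s + h) - sinh s ≤ (exp h - 1) * cosh s := by
  rw [sinh_add, ← cosh_add_sinh h]
  nlinarith [sinh_lt_cosh s, one_le_cosh h, cosh_pos s]

lemma exp_sub_one_le_div_one_sub {h : ℝ} (hh0 : 0 ≤ h) (hh1 : h < 1) : exp h - 1 ≤ h / (1 - h) := by
  have := exp_bound_div_one_sub_of_interval hh0 hh1
  have h1 : 1 / (1 - h) - 1 = h / (1 - h) := by field_simp [(by linarith : 0 < 1 - h).ne']; ring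
  linarith

end Real

section PseudoHyperbolic

def pseudoHypDist (z w : ℂ) : ℝ := ‖(z - w) / (1 - z * conj w)‖

variable {z w : ℂ}

lemma one_sub_mul_conj_ne_zero (hz : z ∈ ball (0 : ℂ) 1) (hw : w ∈ ball (0 : ℂ) 1) :
    1 - z * conj w ≠ 0 := by
  rw [mem_ball_zero_iff] at hz hw
  refine sub_ne_zero.2 fun h => ?_
  have : ‖z * conj w‖ < 1 := by
    rw [norm_mul, norm_conj]; nlinarith [norm_nonneg z, norm_nonneg w]
  rw [← h, norm_one] at this
  exact lt_irrefl _ this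

lemma one_sub_pseudoHypDist_sq (hz : z ∈ ball (0 : ℂ) 1) (hw : w ∈ ball (0 : ℂ) 1) :
    1 - pseudoHypDist z w ^ 2 = (1 - ‖z‖ ^ 2) * (1 - ‖w‖ ^ 2) / ‖1 - z * conj w‖ ^ 2 := by
  have hne := norm_ne_zero_iff.2 (one_sub_mul_conj_ne_zero hz hw)
  rw [pseudoHypDist, norm_div, div_pow, eq_div_iff (pow_ne_zero 2 hne), sub_mul,
    div_mul_cancel₀ _ (pow_ne_zero 2 hne)]
  simp only [Complex.sq_norm, normSq_apply, sub_re, sub_im, mul_re, mul_im, one_re, one_im, conj_re,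
    conj_im]
  ring

lemma pseudoHypDist_nonneg (z w : ℂ) : 0 ≤ pseudoHypDist z w := norm_nonneg _

lemma pseudoHypDist_lt_one (hz : z ∈ ball (0 : ℂ) 1) (hw : w ∈ ball (0 : ℂ) 1) :
    pseudoHypDist z w < 1 := by
  have hpos : 0 < 1 - pseudoHypDist z w ^ 2 := by
    rw [one_sub_pseudoHypDist_sq hz hw]
    have := one_sub_mul_conj_ne_zero hz hw
    rw [mem_ball_zero_iff] at hz hw
    have h1 : 0 < 1 - ‖z‖ ^ 2 := by nlinarith [norm_nonneg z]
    have h2 : 0 < 1 - ‖w‖ ^ 2 := by nlinarith [norm_nonneg w]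
    positivity
  nlinarith [pseudoHypDist_nonneg z w]

lemma pseudoHypDist_zero_right (z : ℂ) : pseudoHypDist z 0 = ‖z‖ := by
  simp [pseudoHypDist]

lemma pseudoHypDist_comm (z w : ℂ) : pseudoHypDist z w = pseudoHypDist w z := by
  rw [pseudoHypDist, pseudoHypDist, norm_div, norm_div, norm_sub_rev z w,
    ← norm_conj (1 - w * conj z)]
  simp [mul_comm]

def mobius (c z : ℂ) : ℂ := (z - c) / (1 - z * conj c)

lemma norm_mobius (c z : ℂ) : ‖mobius c z‖ = pseudoHypDist z c := rfl

lemma mobius_mem_ball {c : ℂ} (hc : c ∈ ball (0 : ℂ) 1) (hz : z ∈ ball (0 : ℂ) 1) :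
    mobius c z ∈ ball (0 : ℂ) 1 :=
  mem_ball_zero_iff.2 (pseudoHypDist_lt_one hz hc)

lemma differentiableOn_mobius {c : ℂ} (hc : c ∈ ball (0 : ℂ) 1) :
    DifferentiableOn ℂ (mobius c) (ball 0 1) :=
  (differentiableOn_id.sub_const c).div ((differentiableOn_const 1).sub
    (differentiableOn_id.mul_const _)) fun _ hz => one_sub_mul_conj_ne_zero hz hc

lemma pseudoHypDist_mobius {a b c : ℂ} (ha : a ∈ ball (0 : ℂ) 1) (hb : b ∈ ball (0 : ℂ) 1)
    (hc : c ∈ ball (0 : ℂ) 1) :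
    pseudoHypDist (mobius c a) (mobius c b) = pseudoHypDist a b := by
  have hac := one_sub_mul_conj_ne_zero ha hc
  have hbc := one_sub_mul_conj_ne_zero hb hc
  have hcc := one_sub_mul_conj_ne_zero hc hc
  have hcb := one_sub_mul_conj_ne_zero hc hb
  -- `field_simp` may meet each denominator with its factors in either order.
  have hcb' : 1 - conj b * c ≠ 0 := by rwa [mul_comm]
  have hbc' : 1 - conj c * b ≠ 0 := by rwa [mul_comm]
  have hac' : 1 - conj c * a ≠ 0 := by rwa [mul_comm]
  have hdiff : mobius c a - mobius c b
      = (a - b) * (1 - c * conj c) / ((1 - a * conj c) * (1 - b * conj c)) := by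
    simp only [mobius]
    field_simp
    ring
  have hdenom : 1 - mobius c a * conj (mobius c b)
      = (1 - a * conj b) * (1 - c * conj c) / ((1 - a * conj c) * (1 - conj b * c)) := by
    simp only [mobius, map_div₀, map_sub, map_mul, conj_conj, map_one]
    field_simp
    ring
  have hnorm : ‖1 - conj b * c‖ = ‖1 - b * conj c‖ := by
    rw [← norm_conj]; simp [mul_comm]
  rw [pseudoHypDist, pseudoHypDist, norm_div, norm_div, hdiff, hdenom]
  simp only [norm_div, norm_mul, hnorm]
  have := norm_pos_iff.2 hcc
  have := norm_pos_iff.2 hac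
  have := norm_pos_iff.2 hbc
  field_simp

lemma pseudoHypDist_le_norm_add_norm_div (hz : z ∈ ball (0 : ℂ) 1) (hw : w ∈ ball (0 : ℂ) 1) :
    pseudoHypDist z w ≤ (‖z‖ + ‖w‖) / (1 + ‖z‖ * ‖w‖) := by
  have h := one_sub_pseudoHypDist_sq hz hw
  have hD := norm_pos_iff.2 (one_sub_mul_conj_ne_zero hz hw)
  have hDle : ‖1 - z * conj w‖ ≤ 1 + ‖z‖ * ‖w‖ := by
    simpa [norm_mul] using norm_sub_le (1 : ℂ) (z * conj w)
  rw [mem_ball_zero_iff] at hz hw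
  have hz0 := norm_nonneg z
  have hw0 := norm_nonneg w
  have hnum : 0 ≤ (1 - ‖z‖ ^ 2) * (1 - ‖w‖ ^ 2) := by
    apply mul_nonneg <;> nlinarith
  have hsq : pseudoHypDist z w ^ 2 ≤ ((‖z‖ + ‖w‖) / (1 + ‖z‖ * ‖w‖)) ^ 2 := by
    have hmono : (1 - ‖z‖ ^ 2) * (1 - ‖w‖ ^ 2) / (1 + ‖z‖ * ‖w‖) ^ 2
        ≤ (1 - ‖z‖ ^ 2) * (1 - ‖w‖ ^ 2) / ‖1 - z * conj w‖ ^ 2 := by gcongr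
    have hid : ((‖z‖ + ‖w‖) / (1 + ‖z‖ * ‖w‖)) ^ 2
        = 1 - (1 - ‖z‖ ^ 2) * (1 - ‖w‖ ^ 2) / (1 + ‖z‖ * ‖w‖) ^ 2 := by
      field_simp
      ring
    linarith
  exact (pow_le_pow_iff_left₀ (pseudoHypDist_nonneg z w) (by positivity) two_ne_zero).1 hsq

lemma pseudoHypDist_le_add_div_one_add_mul {a b c : ℂ} (ha : a ∈ ball (0 : ℂ) 1)
    (hb : b ∈ ball (0 : ℂ) 1) (hc : c ∈ ball (0 : ℂ) 1) :
    pseudoHypDist a b ≤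
      (pseudoHypDist a c + pseudoHypDist c b) / (1 + pseudoHypDist a c * pseudoHypDist c b) := by
  rw [← pseudoHypDist_mobius ha hb hc, pseudoHypDist_comm c b, ← norm_mobius, ← norm_mobius]
  exact pseudoHypDist_le_norm_add_norm_div (mobius_mem_ball hc ha) (mobius_mem_ball hc hb)

lemma hypDistDisk_eq_two_mul_artanh (hz : z ∈ ball (0 : ℂ) 1) (hw : w ∈ ball (0 : ℂ) 1) :
    hypDistDisk z w = 2 * Real.artanh (pseudoHypDist z w) := by
  rw [Real.artanh_eq_half_log ⟨by linarith [pseudoHypDist_nonneg z w],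
    (pseudoHypDist_lt_one hz hw).le⟩, ← mul_assoc, mul_one_div_cancel two_ne_zero, one_mul]
  rfl

lemma hypDistDisk_triangle {a b c : ℂ} (ha : a ∈ ball (0 : ℂ) 1) (hb : b ∈ ball (0 : ℂ) 1)
    (hc : c ∈ ball (0 : ℂ) 1) :
    hypDistDisk a b ≤ hypDistDisk a c + hypDistDisk c b := by
  have hp := pseudoHypDist_nonneg a c
  have hq := pseudoHypDist_nonneg c b
  have hp1 := pseudoHypDist_lt_one ha hc
  have hq1 := pseudoHypDist_lt_one hc hb
  rw [hypDistDisk_eq_two_mul_artanh ha hb, hypDistDisk_eq_two_mul_artanh ha hc,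
    hypDistDisk_eq_two_mul_artanh hc hb, ← mul_add,
    Real.artanh_add_artanh ⟨by linarith, hp1⟩ ⟨by linarith, hq1⟩]
  gcongr
  refine Real.artanh_le_artanh (by linarith [pseudoHypDist_nonneg a b]) ?_
    (pseudoHypDist_le_add_div_one_add_mul ha hb hc)
  rw [div_lt_one (by positivity)]
  nlinarith

lemma hypDistDisk_le_of_mapsTo_ball {H : ℂ → ℂ} (hd : DifferentiableOn ℂ H (ball 0 1))
    (hH : MapsTo H (ball 0 1) (ball 0 1)) (hz : z ∈ ball (0 : ℂ) 1) :
    hypDistDisk (H z) (H 0) ≤ hypDistDisk z 0 := by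
  have h0 : (0 : ℂ) ∈ ball (0 : ℂ) 1 := mem_ball_self one_pos
  have hschwarz : ‖mobius (H 0) (H z)‖ ≤ ‖z‖ :=
    Complex.norm_le_norm_of_mapsTo_ball ((differentiableOn_mobius (hH h0)).comp hd hH)
      (fun w hw => ball_subset_closedBall (mobius_mem_ball (hH h0) (hH hw)))
      (by simp [mobius]) (mem_ball_zero_iff.1 hz)
  rw [hypDistDisk_eq_two_mul_artanh (hH hz) (hH h0), hypDistDisk_eq_two_mul_artanh hz h0]
  gcongr
  refine Real.artanh_le_artanh (by linarith [pseudoHypDist_nonneg (H z) (H 0)])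
    (pseudoHypDist_lt_one hz h0) ?_
  rwa [pseudoHypDist_zero_right, ← norm_mobius]

lemma hypDistDisk_comm (z w : ℂ) : hypDistDisk z w = hypDistDisk w z := by
  have h := pseudoHypDist_comm z w
  unfold pseudoHypDist at h
  rw [hypDistDisk, hypDistDisk, h]

lemma hypDistDisk_le_sum_range {g : ℕ → ℂ} {N : ℕ} (hg : ∀ j ≤ N, g j ∈ ball (0 : ℂ) 1) :
    hypDistDisk (g N) (g 0) ≤ ∑ j ∈ Finset.range N, hypDistDisk (g (j + 1)) (g j) := by
  induction N with
  | zero => simp [hypDistDisk]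
  | succ N ih =>
    rw [Finset.sum_range_succ]
    have := hypDistDisk_triangle (hg (N + 1) le_rfl) (hg 0 (Nat.zero_le _)) (hg N N.le_succ)
    linarith [ih fun j hj => hg j (hj.trans N.le_succ)]

end PseudoHyperbolic

section InverseFunction

variable {f : ℂ → ℂ} {U : Set ℂ}

lemma Set.InjOn.not_eventually_eq_nhds {z : ℂ} (hinj : InjOn f U) (hU : U ∈ 𝓝 z) :
    ¬ ∀ᶠ w in 𝓝 z, f w = f z := by
  intro h
  have hz : ∀ᶠ w in 𝓝[≠] z, w = z :=
    nhdsWithin_le_nhds ((h.and hU).mono fun w hw => hinj hw.2 (mem_of_mem_nhds hU) hw.1)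
  obtain ⟨w, hwz, hw⟩ := (hz.and self_mem_nhdsWithin).exists
  exact hw hwz

lemma nhds_le_map_nhds_of_injOn (hU : IsOpen U) (hd : DifferentiableOn ℂ f U)
    (hinj : InjOn f U) {z : ℂ} (hz : z ∈ U) : 𝓝 (f z) ≤ map f (𝓝 z) :=
  ((hd.analyticOnNhd hU) z hz).eventually_constant_or_nhds_le_map_nhds.resolve_left
    (hinj.not_eventually_eq_nhds (hU.mem_nhds hz))

lemma isOpen_image_of_injOn (hU : IsOpen U) (hd : DifferentiableOn ℂ f U)
    (hinj : InjOn f U) : IsOpen (f '' U) := by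
  rw [isOpen_iff_mem_nhds]
  rintro _ ⟨z, hz, rfl⟩
  exact nhds_le_map_nhds_of_injOn hU hd hinj hz (image_mem_map (hU.mem_nhds hz))

lemma continuousAt_invFunOn (hU : IsOpen U) (hd : DifferentiableOn ℂ f U)
    (hinj : InjOn f U) {z : ℂ} (hz : z ∈ U) : ContinuousAt (invFunOn f U) (f z) := by
  have hleft : ∀ᶠ w in 𝓝 z, invFunOn f U (f w) = w :=
    (hU.eventually_mem hz).mono fun w hw => hinj.leftInvOn_invFunOn hw
  rw [ContinuousAt, hinj.leftInvOn_invFunOn hz]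
  exact (tendsto_map'_iff.2 (tendsto_id.congr' (hleft.mono fun w hw => hw.symm))).mono_left
    (nhds_le_map_nhds_of_injOn hU hd hinj hz)

lemma eventually_deriv_ne_zero_of_injOn (hU : IsOpen U) (hd : DifferentiableOn ℂ f U)
    (hinj : InjOn f U)
    {z : ℂ} (hz : z ∈ U) : ∀ᶠ w in 𝓝[≠] z, deriv f w ≠ 0 := by
  refine (((hd.analyticOnNhd hU).deriv z hz).eventually_eq_zero_or_eventually_ne_zero).resolve_left
    fun hzero => hinj.not_eventually_eq_nhds (hU.mem_nhds hz) ?_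
  obtain ⟨ε, hε, hball⟩ := Metric.eventually_nhds_iff_ball.1 (hzero.and (hU.eventually_mem hz))
  filter_upwards [ball_mem_nhds z hε] with w hw
  exact isOpen_ball.is_const_of_deriv_eq_zero (convex_ball z ε).isPreconnected
    (hd.mono fun v hv => (hball v hv).2) (fun v hv => (hball v hv).1) hw (mem_ball_self hε)

lemma differentiableAt_invFunOn_of_deriv_ne_zero (hU : IsOpen U) (hd : DifferentiableOn ℂ f U)
    (hinj : InjOn f U)
    {z : ℂ} (hz : z ∈ U) (hf' : deriv f z ≠ 0) :
    DifferentiableAt ℂ (invFunOn f U) (f z) := by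
  have hright : ∀ᶠ y in 𝓝 (f z), f (invFunOn f U y) = y :=
    (isOpen_image_of_injOn hU hd hinj).eventually_mem (mem_image_of_mem f hz) |>.mono
      fun y hy => invFunOn_eq hy
  have hderiv : HasDerivAt f (deriv f (invFunOn f U (f z))) (invFunOn f U (f z)) := by
    rw [hinj.leftInvOn_invFunOn hz]
    exact (hd.differentiableAt (hU.mem_nhds hz)).hasDerivAt
  exact (hderiv.of_local_left_inverse (continuousAt_invFunOn hU hd hinj hz)
    (by rwa [hinj.leftInvOn_invFunOn hz]) hright).differentiableAt

theorem differentiableOn_invFunOn_image (hU : IsOpen U) (hd : DifferentiableOn ℂ f U)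
    (hinj : InjOn f U) :
    DifferentiableOn ℂ (invFunOn f U) (f '' U) := by
  rintro _ ⟨z, hz, rfl⟩
  refine (Complex.analyticAt_of_differentiable_on_punctured_nhds_of_continuousAt ?_
    (continuousAt_invFunOn hU hd hinj hz)).differentiableAt.differentiableWithinAt
  have himage : ∀ᶠ y in 𝓝[≠] f z, y ∈ f '' U := nhdsWithin_le_nhds
    ((isOpen_image_of_injOn hU hd hinj).mem_nhds (mem_image_of_mem f hz))
  have hne : ∀ᶠ y in 𝓝[≠] f z, invFunOn f U y ≠ z := by
    filter_upwards [self_mem_nhdsWithin, himage] with y hyz hy hy'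
    exact hyz (by rw [← invFunOn_eq hy, hy']; rfl)
  have htendsto : Tendsto (invFunOn f U) (𝓝[≠] f z) (𝓝[≠] z) := by
    refine tendsto_nhdsWithin_iff.2 ⟨?_, hne⟩
    have hcont := continuousAt_invFunOn hU hd hinj hz
    rw [ContinuousAt, hinj.leftInvOn_invFunOn hz] at hcont
    exact hcont.mono_left nhdsWithin_le_nhds
  filter_upwards [htendsto.eventually (eventually_deriv_ne_zero_of_injOn hU hd hinj hz), himage]
    with y hy' hy
  obtain ⟨w, hw, rfl⟩ := hy
  rw [hinj.leftInvOn_invFunOn hw] at hy'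
  exact differentiableAt_invFunOn_of_deriv_ne_zero hU hd hinj hw hy'

end InverseFunction

section HolomorphicToDisk

variable {D : Set ℂ} {G : ℂ → ℂ}

lemma hypDistDisk_le_of_ball_subset (hG : DifferentiableOn ℂ G D) (hGD : MapsTo G D (ball 0 1))
    {c w : ℂ} {ρ : ℝ} (hball : ball c ρ ⊆ D) (hw : w ∈ ball c ρ) :
    hypDistDisk (G w) (G c) ≤ 2 * Real.artanh (‖w - c‖ / ρ) := by
  have hρ : 0 < ρ := pos_of_mem_ball hw
  have haff : MapsTo (fun u : ℂ => c + ρ * u) (ball 0 1) D := fun u hu => hball <| by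
    rw [mem_ball_zero_iff] at hu
    rw [mem_ball, dist_eq_norm, add_sub_cancel_left, norm_mul, norm_real, Real.norm_of_nonneg hρ.le]
    nlinarith
  have hu : (w - c) / ρ ∈ ball (0 : ℂ) 1 := by
    rw [mem_ball_zero_iff, norm_div, norm_real, Real.norm_of_nonneg hρ.le, div_lt_one hρ,
      ← dist_eq_norm]
    exact hw
  have hH := hypDistDisk_le_of_mapsTo_ball (hG.comp (by fun_prop) haff) (hGD.comp haff) hu
  have hρ' : (ρ : ℂ) ≠ 0 := ofReal_ne_zero.2 hρ.ne'
  simp only [Function.comp_apply, mul_zero, add_zero, mul_div_cancel₀ _ hρ', add_sub_cancel] at hH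
  rwa [hypDistDisk_eq_two_mul_artanh hu (mem_ball_self one_pos), pseudoHypDist_zero_right, norm_div,
    norm_real, Real.norm_of_nonneg hρ.le] at hH

lemma hypDistDisk_step_le (hG : DifferentiableOn ℂ G D) (hGD : MapsTo G D (ball 0 1))
    {γ : ℝ → ℂ} {s h : ℝ} (hh0 : 0 ≤ h) (hh : h < 1 / 2)
    (hγ : ‖γ (s + h) - γ s‖ ≤ Real.sinh (s + h) - Real.sinh s)
    (hball : ball (γ s) (Real.cosh s) ⊆ D) :
    hypDistDisk (G (γ (s + h))) (G (γ s)) ≤ 2 * (h / (1 - 2 * h)) := by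
  set u := ‖γ (s + h) - γ s‖ / Real.cosh s
  have hcosh := Real.cosh_pos s
  have hu0 : 0 ≤ u := by positivity
  have hu : u * (1 - h) ≤ h := by
    have h1 : u ≤ h / (1 - h) := calc
      u ≤ (Real.sinh (s + h) - Real.sinh s) / Real.cosh s := div_le_div_of_nonneg_right hγ hcosh.le
      _ ≤ Real.exp h - 1 := (div_le_iff₀ hcosh).2 (Real.sinh_add_sub_sinh_le s h)
      _ ≤ h / (1 - h) := Real.exp_sub_one_le_div_one_sub hh0 (by linarith)
    rwa [le_div_iff₀ (by linarith)] at h1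
  have hu1 : u < 1 := by nlinarith
  have hw : γ (s + h) ∈ ball (γ s) (Real.cosh s) := by
    rw [mem_ball, dist_eq_norm, ← div_lt_one hcosh]
    exact hu1
  calc hypDistDisk (G (γ (s + h))) (G (γ s))
      ≤ 2 * Real.artanh u := hypDistDisk_le_of_ball_subset hG hGD hball hw
    _ ≤ 2 * (u / (1 - u)) := by gcongr; exact Real.artanh_le_div_one_sub hu0 hu1
    _ ≤ 2 * (h / (1 - 2 * h)) := by
      gcongr 2 * ?_
      rw [div_le_div_iff₀ (by linarith) (by linarith)]
      nlinarith

lemma hypDistDisk_path_le_of_subdivision (hG : DifferentiableOn ℂ G D)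
    (hGD : MapsTo G D (ball 0 1)) {γ : ℝ → ℂ} {a b : ℝ} (hab : a ≤ b)
    (hγ : ∀ s ∈ Icc a b, ∀ s' ∈ Icc a b, s ≤ s' → ‖γ s' - γ s‖ ≤ Real.sinh s' - Real.sinh s)
    (hball : ∀ s ∈ Icc a b, ball (γ s) (Real.cosh s) ⊆ D) {N : ℕ} (hN : 0 < N)
    (hsmall : (b - a) / N < 1 / 2) :
    hypDistDisk (G (γ b)) (G (γ a)) ≤ 2 * (b - a) / (1 - 2 * ((b - a) / N)) := by
  have hN' : (0 : ℝ) < N := Nat.cast_pos.2 hN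
  set h := (b - a) / N
  have hh0 : 0 ≤ h := div_nonneg (by linarith) hN'.le
  have hNh : N * h = b - a := mul_div_cancel₀ _ hN'.ne'
  have hmem : ∀ j ≤ N, a + j * h ∈ Icc a b := fun j hj => by
    refine ⟨by nlinarith [(Nat.cast_nonneg j : (0 : ℝ) ≤ j)], ?_⟩
    have : (j : ℝ) * h ≤ N * h := by gcongr
    linarith
  have hsum := hypDistDisk_le_sum_range (g := fun j : ℕ => G (γ (a + j * h))) (N := N)
    fun j hj => hGD (hball _ (hmem j hj) (mem_ball_self (Real.cosh_pos _)))
  have hstep : ∀ j ∈ Finset.range N,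
      hypDistDisk (G (γ (a + (j + 1 : ℕ) * h))) (G (γ (a + j * h))) ≤ 2 * (h / (1 - 2 * h)) := by
    intro j hj
    have hj : j + 1 ≤ N := Finset.mem_range.1 hj
    have hsucc : a + (j + 1 : ℕ) * h = a + j * h + h := by push_cast; ring
    rw [hsucc]
    refine hypDistDisk_step_le hG hGD hh0 hsmall ?_ (hball _ (hmem j (by omega)))
    rw [← hsucc]
    exact hγ _ (hmem j (by omega)) _ (hmem _ hj) (by rw [hsucc]; linarith)
  have hends : a + N * h = b := by rw [hNh]; ring
  simp only [hends, Nat.cast_zero, zero_mul, add_zero] at hsum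
  calc hypDistDisk (G (γ b)) (G (γ a)) ≤ N * (2 * (h / (1 - 2 * h))) := by
        simpa using hsum.trans (Finset.sum_le_sum hstep)
    _ = 2 * (N * h) / (1 - 2 * h) := by ring
    _ = 2 * (b - a) / (1 - 2 * h) := by rw [hNh]

lemma hypDistDisk_path_le (hG : DifferentiableOn ℂ G D) (hGD : MapsTo G D (ball 0 1))
    {γ : ℝ → ℂ} {a b : ℝ} (hab : a ≤ b)
    (hγ : ∀ s ∈ Icc a b, ∀ s' ∈ Icc a b, s ≤ s' → ‖γ s' - γ s‖ ≤ Real.sinh s' - Real.sinh s)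
    (hball : ∀ s ∈ Icc a b, ball (γ s) (Real.cosh s) ⊆ D) :
    hypDistDisk (G (γ b)) (G (γ a)) ≤ 2 * (b - a) := by
  have hlim : Tendsto (fun N : ℕ => (b - a) / (N : ℝ)) atTop (𝓝 0) :=
    tendsto_const_div_atTop_nhds_zero_nat _
  have hbound := tendsto_const_nhds (x := 2 * (b - a)).div
    (tendsto_const_nhds.sub (tendsto_const_nhds.mul hlim)) (by norm_num : (1 : ℝ) - 2 * 0 ≠ 0)
  rw [mul_zero, sub_zero, div_one] at hbound
  refine ge_of_tendsto hbound ?_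
  filter_upwards [eventually_gt_atTop 0, hlim.eventually (gt_mem_nhds one_half_pos)] with N hN
    hsmall
  exact hypDistDisk_path_le_of_subdivision hG hGD hab hγ hball hN hsmall

end HolomorphicToDisk

section Comb

variable {x : ℕ → ℝ}

lemma ball_subset_comb (hmono : Monotone x) (hx0 : x 0 = 0) (hx1 : 1 ≤ x 1) {n : ℕ}
    {t d ρ : ℝ} (hd : 0 ≤ d) (hleft : x n + d ≤ t) (hright : t + d ≤ x (n + 1))
    (hρ : ρ ^ 2 ≤ 1 + d ^ 2) : ball (t : ℂ) ρ ⊆ comb x := by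
  intro z hz
  rw [mem_ball, dist_eq_norm] at hz
  have hsq : (z.re - t) ^ 2 + z.im ^ 2 < 1 + d ^ 2 := by
    have h := pow_lt_pow_left₀ hz (norm_nonneg _) two_ne_zero
    rw [Complex.sq_norm, normSq_apply] at h
    simp only [sub_re, sub_im, ofReal_re, ofReal_im, sub_zero] at h
    nlinarith
  have hxn : 0 ≤ x n := hx0 ▸ hmono (Nat.zero_le n)
  refine ⟨show -(x 1) < z.re by nlinarith [sq_nonneg z.im], ?_⟩
  simp only [mem_iUnion, Set.mem_ofPred_eq, not_exists, not_and]
  intro m hm him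
  have hgap : d ^ 2 ≤ (z.re - t) ^ 2 := by
    rcases le_or_gt m n with hmn | hmn
    · nlinarith [hmono hmn]
    · nlinarith [hmono (Nat.succ_le_of_lt hmn)]
  have him2 : 1 ≤ z.im ^ 2 := by nlinarith [sq_abs z.im, abs_nonneg z.im]
  linarith

lemma ofReal_mem_comb (hmono : Monotone x) (hx0 : x 0 = 0) (hx1 : 1 ≤ x 1) {n : ℕ} {t : ℝ}
    (ht1 : x n ≤ t) (ht2 : t ≤ x (n + 1)) : (t : ℂ) ∈ comb x :=
  ball_subset_comb (n := n) hmono hx0 hx1 le_rfl (by linarith) (by linarith)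
    (by norm_num : (1 : ℝ) ^ 2 ≤ 1 + 0 ^ 2) (mem_ball_self one_pos)

lemma ball_cosh_subset_comb (hmono : Monotone x) (hx0 : x 0 = 0) (hx1 : 1 ≤ x 1) {n : ℕ}
    {s : ℝ} (hs : 0 ≤ s) (hsinh : 2 * Real.sinh s ≤ x (n + 1) - x n) :
    ball ((x n + Real.sinh s : ℝ) : ℂ) (Real.cosh s) ⊆ comb x ∧
      ball ((x (n + 1) - Real.sinh s : ℝ) : ℂ) (Real.cosh s) ⊆ comb x := by
  have hd : 0 ≤ Real.sinh s := Real.sinh_nonneg_iff.2 hs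
  have hρ : Real.cosh s ^ 2 ≤ 1 + Real.sinh s ^ 2 := by rw [Real.cosh_sq]; linarith
  exact ⟨ball_subset_comb hmono hx0 hx1 hd le_rfl (by linarith) hρ,
    ball_subset_comb hmono hx0 hx1 hd (by linarith) (by linarith) hρ⟩

variable {G : ℂ → ℂ}

lemma hypDistDisk_comb_sinh_le (hG : DifferentiableOn ℂ G (comb x))
    (hGD : MapsTo G (comb x) (ball 0 1)) (hmono : Monotone x) (hx0 : x 0 = 0) (hx1 : 1 ≤ x 1)
    {n : ℕ} {s₁ s₂ : ℝ} (hs₁ : 0 ≤ s₁) (hs₁₂ : s₁ ≤ s₂)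
    (hsinh : 2 * Real.sinh s₂ ≤ x (n + 1) - x n) :
    hypDistDisk (G (x n + Real.sinh s₂ : ℝ)) (G (x n + Real.sinh s₁ : ℝ)) ≤ 2 * (s₂ - s₁) ∧
      hypDistDisk (G (x (n + 1) - Real.sinh s₂ : ℝ)) (G (x (n + 1) - Real.sinh s₁ : ℝ))
        ≤ 2 * (s₂ - s₁) := by
  have hballs : ∀ s ∈ Icc s₁ s₂, ball ((x n + Real.sinh s : ℝ) : ℂ) (Real.cosh s) ⊆ comb x ∧
      ball ((x (n + 1) - Real.sinh s : ℝ) : ℂ) (Real.cosh s) ⊆ comb x := fun s hs =>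
    ball_cosh_subset_comb hmono hx0 hx1 (hs₁.trans hs.1)
      (by linarith [Real.sinh_le_sinh.2 hs.2])
  have hspeed : ∀ s s' : ℝ, s ≤ s' → |Real.sinh s' - Real.sinh s| ≤ Real.sinh s' - Real.sinh s :=
    fun s s' hss' => (abs_of_nonneg (sub_nonneg.2 (Real.sinh_le_sinh.2 hss'))).le
  constructor
  · refine hypDistDisk_path_le (γ := fun s => ((x n + Real.sinh s : ℝ) : ℂ)) hG hGD hs₁₂
      (fun s _ s' _ hss' => ?_) fun s hs => (hballs s hs).1
    rw [← ofReal_sub, norm_real, Real.norm_eq_abs, add_sub_add_left_eq_sub]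
    exact hspeed s s' hss'
  · refine hypDistDisk_path_le (γ := fun s => ((x (n + 1) - Real.sinh s : ℝ) : ℂ)) hG hGD hs₁₂
      (fun s _ s' _ hss' => ?_) fun s hs => (hballs s hs).2
    rw [← ofReal_sub, norm_real, Real.norm_eq_abs, sub_sub_sub_cancel_left, abs_sub_comm]
    exact hspeed s s' hss'

lemma hypDistDisk_comb_le_four_mul_arsinh (hG : DifferentiableOn ℂ G (comb x))
    (hGD : MapsTo G (comb x) (ball 0 1)) (hmono : Monotone x) (hx0 : x 0 = 0) (hx1 : 1 ≤ x 1)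
    {n : ℕ} {r : ℝ} (hr1 : x n < r) (hr2 : r ≤ x (n + 1)) :
    hypDistDisk (G (x n)) (G r) ≤ 4 * Real.arsinh r := by
  have hxn : 0 ≤ x n := hx0 ▸ hmono (Nat.zero_le n)
  have hr : 0 ≤ Real.arsinh r := Real.arsinh_nonneg_iff.2 (by linarith)
  rcases le_or_gt (r - x n) ((x (n + 1) - x n) / 2) with hle | hgt
  · have hA0 : 0 ≤ Real.arsinh (r - x n) := Real.arsinh_nonneg_iff.2 (by linarith)
    have h := (hypDistDisk_comb_sinh_le hG hGD hmono hx0 hx1 le_rfl hA0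
      (by rw [Real.sinh_arsinh]; linarith)).1
    rw [Real.sinh_arsinh, Real.sinh_zero, add_zero, add_sub_cancel, hypDistDisk_comm] at h
    linarith [Real.arsinh_le_arsinh.2 (by linarith : r - x n ≤ r)]
  · set B := Real.arsinh ((x (n + 1) - x n) / 2)
    have hB0 : 0 ≤ B := Real.arsinh_nonneg_iff.2 (by linarith)
    have hsinhB : 2 * Real.sinh B = x (n + 1) - x n := by rw [Real.sinh_arsinh]; ring
    have hE0 : 0 ≤ Real.arsinh (x (n + 1) - r) := Real.arsinh_nonneg_iff.2 (by linarith)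
    have hEB : Real.arsinh (x (n + 1) - r) ≤ B := Real.arsinh_le_arsinh.2 (by linarith)
    have hBr : B ≤ Real.arsinh r := Real.arsinh_le_arsinh.2 (by linarith)
    have h₁ := (hypDistDisk_comb_sinh_le hG hGD hmono hx0 hx1 le_rfl hB0 hsinhB.le).1
    have h₂ := (hypDistDisk_comb_sinh_le hG hGD hmono hx0 hx1 hE0 hEB hsinhB.le).2
    rw [Real.sinh_zero, add_zero, hypDistDisk_comm] at h₁
    rw [show x (n + 1) - Real.sinh B = x n + Real.sinh B by linarith,
      Real.sinh_arsinh (x (n + 1) - r), sub_sub_cancel] at h₂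
    have hmem : ∀ t : ℝ, x n ≤ t → t ≤ x (n + 1) → G t ∈ ball (0 : ℂ) 1 := fun t ht1 ht2 =>
      hGD (ofReal_mem_comb hmono hx0 hx1 ht1 ht2)
    have := hypDistDisk_triangle (hmem (x n) le_rfl (by linarith)) (hmem r hr1.le hr2)
      (hmem (x n + Real.sinh B) (by linarith [Real.sinh_nonneg_iff.2 hB0]) (by linarith))
    linarith

end Comb

theorem comb_hypDist_xn_r_le_general (x : ℕ → ℝ) (hx0 : x 0 = 0)
    (hmono : StrictMono x)
    (hsep : ∃ l : ℝ, 1 < l ∧ ∀ n : ℕ, l ≤ x (n + 1) - x n)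
    (n : ℕ) (r : ℝ) (hr1 : x n < r) (hr2 : r ≤ x (n + 1))
    (f : ℂ → ℂ) (hf : IsRiemannMap f (comb x))
    (a b : ℂ) (ha : a ∈ Metric.ball (0 : ℂ) 1) (hb : b ∈ Metric.ball (0 : ℂ) 1)
    (hfa : f a = (x n : ℂ)) (hfb : f b = (r : ℂ)) :
    hypDistDisk a b ≤ 4 * Real.arsinh r := by
  obtain ⟨hd, hinj, himage⟩ := hf
  obtain ⟨l, hl, hgap⟩ := hsep
  have hG : DifferentiableOn ℂ (invFunOn f (ball 0 1)) (comb x) :=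
    himage ▸ differentiableOn_invFunOn_image isOpen_ball hd hinj
  have hGD : MapsTo (invFunOn f (ball 0 1)) (comb x) (ball 0 1) :=
    himage ▸ fun _ hy => invFunOn_mem hy
  rw [← hinj.leftInvOn_invFunOn ha, ← hinj.leftInvOn_invFunOn hb, hfa, hfb]
  exact hypDistDisk_comb_le_four_mul_arsinh hG hGD hmono.monotone hx0
    (by linarith [hx0 ▸ hgap 0]) hr1 hr2

/-- **Estimate (3.7).** For every `n ≥ 1` and every `r` with `xₙ₋₁ < r ≤ xₙ`,
the hyperbolic distance in `C` between `xₙ₋₁` and `r` (computed via any Riemann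
map `f` of the unit disk onto `C`) satisfies `d_C(xₙ₋₁, r) ≤ 4 arcsinh r`. -/
theorem comb_hypDist_xn_r_le (x : ℕ → ℝ) (hx0 : x 0 = 0)
    (hmono : StrictMono x) (hxlim : Tendsto x atTop atTop)
    (hsep : ∃ l : ℝ, 1 < l ∧ ∀ n : ℕ, l ≤ x (n + 1) - x n)
    (n : ℕ) (r : ℝ) (hr1 : x n < r) (hr2 : r ≤ x (n + 1))
    (f : ℂ → ℂ) (hf : IsRiemannMap f (comb x))
    (a b : ℂ) (ha : a ∈ Metric.ball (0 : ℂ) 1) (hb : b ∈ Metric.ball (0 : ℂ) 1)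
    (hfa : f a = (x n : ℂ)) (hfb : f b = (r : ℂ)) :
    hypDistDisk a b ≤ 4 * Real.arsinh r :=
  comb_hypDist_xn_r_le_general x hx0 hmono hsep n r hr1 hr2 f hf a b ha hb hfa hfb
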